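/- arXiv:1105.3713 — 2 statements merged into one kernel-verified Lean document; each statement's English description precedes it below -/
import Mathlib

section
/- For all nonnegative integers i and j, M(i,j;ω) = Σ_{k=0}^{j} m_{j,k}·M_{i+k;ω}. -/
open scoped BigOperators

/-- Weighted count of Motzkin-type paths from (0,0) to (n,j): steps (1,1),(1,-1),(1,0),
horizontal steps weighted ω, staying weakly above the x-axis. -/
def motzkinM (ω : ℚ) : ℕ → ℤ → ℚ
  | 0, j => if j = 0 then 1 else 0
  | n+1, j => if j < 0 then 0 else
      motzkinM ω n (j-1) + ω * motzkinM ω n j + motzkinM ω n (j+1)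

/-- Inverse Motzkin matrix entries: m i j is the coefficient of t^i in
t^j * (1 + ω t + t^2)⁻¹ ^ (j+1). -/
noncomputable def minv (ω : ℚ) (i j : ℕ) : ℚ :=
  PowerSeries.coeff (R := ℚ) i ((PowerSeries.X : PowerSeries ℚ) ^ j *
    ((1 + PowerSeries.C (R := ℚ) ω * PowerSeries.X + PowerSeries.X ^ 2)⁻¹) ^ (j + 1))

/-!
The numbers `M(n,0)` are the moments of the linear functional `L` on `ℚ[X]` with `L(Xⁿ) = M(n,0)`,
and `M(i,j) = L(Xⁱ pⱼ)` for the polynomials `p₀ = 1`, `p₁ = X - ω`, `pⱼ₊₂ = (X - ω) pⱼ₊₁ - pⱼ`: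
by the step rule of the paths, both sides satisfy this recurrence in `j`. Row `j` of the inverse
Motzkin matrix is the coefficient list of `pⱼ`, since
`Σⱼ pⱼ tʲ = 1 / (1 + (ω - X) t + t²) = Σₖ Xᵏ tᵏ / (1 + ω t + t²)ᵏ⁺¹`; coefficientwise this
recurrence comes from `(1 + ω t + t²) (1 + ω t + t²)⁻¹ = 1`.
-/

open Polynomial

section MomentFunctional

variable {R : Type*} [CommSemiring R] (a : ℕ → R)

noncomputable def momentFunctional : R[X] →ₗ[R] R :=
  lsum fun n => a n • LinearMap.id

@[simp]
lemma momentFunctional_monomial (n : ℕ) (c : R) : momentFunctional a (monomial n c) = c * a n := by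
  simp [momentFunctional, lsum_apply, mul_comm]

@[simp]
lemma momentFunctional_C_mul_X_pow (n : ℕ) (c : R) : momentFunctional a (C c * X ^ n) = c * a n := by
  rw [C_mul_X_pow_eq_monomial, momentFunctional_monomial]

@[simp]
lemma momentFunctional_X_pow (n : ℕ) : momentFunctional a (X ^ n) = a n := by
  simpa using momentFunctional_C_mul_X_pow a n 1

end MomentFunctional

noncomputable def motzkinDenom (ω : ℚ) : PowerSeries ℚ :=
  1 + PowerSeries.C ω * PowerSeries.X + PowerSeries.X ^ 2

section InverseMotzkin

variable (ω : ℚ)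

lemma minv_eq (j k : ℕ) :
    minv ω j k = PowerSeries.coeff j (PowerSeries.X ^ k * (motzkinDenom ω)⁻¹ ^ (k + 1)) := rfl

lemma constantCoeff_motzkinDenom : PowerSeries.constantCoeff (motzkinDenom ω) = 1 := by
  simp [motzkinDenom]

lemma motzkinDenom_mul_inv : motzkinDenom ω * (motzkinDenom ω)⁻¹ = 1 :=
  PowerSeries.mul_inv_cancel _ (by simp [constantCoeff_motzkinDenom])

lemma coeff_motzkinDenom_mul (f : PowerSeries ℚ) (n : ℕ) :
    PowerSeries.coeff (n + 2) (motzkinDenom ω * f) =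
      PowerSeries.coeff (n + 2) f + ω * PowerSeries.coeff (n + 1) f + PowerSeries.coeff n f := by
  simp [motzkinDenom, add_mul, mul_assoc, PowerSeries.coeff_X_pow_mul', PowerSeries.coeff_succ_X_mul]

lemma minv_eq_zero_of_lt {j k : ℕ} (h : j < k) : minv ω j k = 0 := by
  rw [minv_eq, PowerSeries.coeff_X_pow_mul', if_neg h.not_ge]

lemma minv_self (j : ℕ) : minv ω j j = 1 := by
  simp [minv_eq, PowerSeries.coeff_X_pow_mul', constantCoeff_motzkinDenom]

lemma minv_one_zero : minv ω 1 0 = -ω := by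
  rw [minv_eq, pow_zero, one_mul, pow_one, PowerSeries.coeff_inv]
  simp [Finset.Nat.antidiagonal_succ, motzkinDenom, PowerSeries.coeff_X]

lemma minv_add_two_zero (j : ℕ) :
    minv ω (j + 2) 0 = -ω * minv ω (j + 1) 0 - minv ω j 0 := by
  have h := congrArg (PowerSeries.coeff (j + 2)) (motzkinDenom_mul_inv ω)
  rw [coeff_motzkinDenom_mul, PowerSeries.coeff_one, if_neg (by omega)] at h
  simp only [minv_eq, pow_zero, one_mul, zero_add, pow_one]
  linear_combination h

lemma minv_add_two_succ (j k : ℕ) :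
    minv ω (j + 2) (k + 1) = minv ω (j + 1) k - ω * minv ω (j + 1) (k + 1) - minv ω j (k + 1) := by
  have key : motzkinDenom ω * (PowerSeries.X ^ (k + 1) * (motzkinDenom ω)⁻¹ ^ (k + 2)) =
      PowerSeries.X * (PowerSeries.X ^ k * (motzkinDenom ω)⁻¹ ^ (k + 1)) := by
    linear_combination (PowerSeries.X ^ (k + 1) * (motzkinDenom ω)⁻¹ ^ (k + 1)) * motzkinDenom_mul_inv ω
  have h := congrArg (PowerSeries.coeff (j + 2)) key
  rw [coeff_motzkinDenom_mul, PowerSeries.coeff_succ_X_mul] at h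
  simp only [minv_eq]
  linear_combination h

end InverseMotzkin

noncomputable def minvRow (ω : ℚ) (j : ℕ) : ℚ[X] :=
  ∑ k ∈ Finset.range (j + 1), C (minv ω j k) * X ^ k

section InverseMotzkinRows

variable (ω : ℚ)

lemma coeff_minvRow (j k : ℕ) : (minvRow ω j).coeff k = minv ω j k := by
  rw [minvRow, finsetSum_coeff]
  simp only [coeff_C_mul_X_pow, Finset.sum_ite_eq, Finset.mem_range]
  split_ifs with h
  · rfl
  · exact (minv_eq_zero_of_lt ω (by omega)).symm

lemma minvRow_zero : minvRow ω 0 = 1 := by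
  simp [minvRow, minv_self]

lemma minvRow_one : minvRow ω 1 = X - C ω := by
  simp [minvRow, Finset.sum_range_succ, minv_self, minv_one_zero, sub_eq_neg_add]

lemma minvRow_add_two (j : ℕ) :
    minvRow ω (j + 2) = (X - C ω) * minvRow ω (j + 1) - minvRow ω j := by
  ext (_ | k)
  · simp [sub_mul, coeff_minvRow, minv_add_two_zero]
  · simp [sub_mul, coeff_minvRow, minv_add_two_succ]

end InverseMotzkinRows

section MotzkinPaths

variable (ω : ℚ)

lemma motzkinM_of_neg (n : ℕ) {j : ℤ} (h : j < 0) : motzkinM ω n j = 0 := by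
  cases n <;> simp [motzkinM, h, h.ne]

lemma motzkinM_succ (n : ℕ) {j : ℤ} (hj : 0 ≤ j) :
    motzkinM ω (n + 1) j = motzkinM ω n (j - 1) + ω * motzkinM ω n j + motzkinM ω n (j + 1) := by
  rw [motzkinM, if_neg hj.not_gt]

lemma motzkinM_one (n : ℕ) : motzkinM ω n 1 = motzkinM ω (n + 1) 0 - ω * motzkinM ω n 0 := by
  rw [motzkinM_succ ω n le_rfl, zero_sub, zero_add, motzkinM_of_neg ω n (by norm_num : (-1 : ℤ) < 0)]
  ring

lemma motzkinM_add_two (n j : ℕ) :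
    motzkinM ω n (j + 2 : ℕ) =
      motzkinM ω (n + 1) (j + 1 : ℕ) - ω * motzkinM ω n (j + 1 : ℕ) - motzkinM ω n j := by
  rw [motzkinM_succ ω n (by positivity)]
  push_cast
  ring_nf

lemma motzkinM_eq_momentFunctional (i j : ℕ) :
    motzkinM ω i j = momentFunctional (fun n => motzkinM ω n 0) (X ^ i * minvRow ω j) := by
  induction j using Nat.twoStepInduction generalizing i with
  | zero => rw [minvRow_zero, mul_one, momentFunctional_X_pow, Nat.cast_zero]
  | one =>
    rw [minvRow_one, mul_sub, ← pow_succ, mul_comm, ← smul_eq_C_mul, map_sub, map_smul,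
      momentFunctional_X_pow, momentFunctional_X_pow, smul_eq_mul, Nat.cast_one, motzkinM_one]
  | more j ih₀ ih₁ =>
    rw [motzkinM_add_two, ih₀, ih₁, ih₁, minvRow_add_two]
    have h : X ^ i * ((X - C ω) * minvRow ω (j + 1) - minvRow ω j) =
        X ^ (i + 1) * minvRow ω (j + 1) - ω • (X ^ i * minvRow ω (j + 1)) - X ^ i * minvRow ω j := by
      rw [smul_eq_C_mul]
      ring
    rw [h, map_sub, map_sub, map_smul, smul_eq_mul]

end MotzkinPaths

theorem motzkin_from_inverse (ω : ℚ) (i j : ℕ) :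
    motzkinM ω i j = ∑ k ∈ Finset.range (j+1), minv ω j k * motzkinM ω (i+k) 0 := by
  rw [motzkinM_eq_momentFunctional, minvRow, Finset.mul_sum, map_sum]
  refine Finset.sum_congr rfl fun k _ => ?_
  rw [mul_left_comm, ← pow_add, momentFunctional_C_mul_X_pow]
end

section
/- The Delannoy polynomial d_k(t) = Σ_{l=0}^{k} C(k−l,l)·ω^l·t^l·(1+t)^{k−2l} has generating function Σ_{k≥0} d_k(t)·x^k = 1/(1 − x − t(x + ωx²)). -/
open scoped BigOperators

/-- The weighted Delannoy polynomial d_k(t) = Σ_{l=0}^{k} C(k−l,l) ω^l t^l (1+t)^{k−2l}. -/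
noncomputable def delannoyPoly (ω : ℚ) (k : ℕ) : Polynomial ℚ :=
  ∑ l ∈ Finset.range (k+1),
    Polynomial.C (((k - l).choose l : ℚ) * ω ^ l) * Polynomial.X ^ l *
      (1 + Polynomial.X) ^ (k - 2*l)

/-! By Pascal's rule the Delannoy polynomials satisfy `d_{k+2} = (1 + t) d_{k+1} + ωt d_k`, with
`d_0 = 1` and `d_1 = 1 + t`. Comparing coefficients, any sequence with such a two-term recurrence
`f_{k+2} = a f_{k+1} + b f_k`, `f_0 = 1`, `f_1 = a` has generating function `1 / (1 - a x - b x²)`. -/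

open Finset

theorem Nat.choose_succ_sub_succ (k l : ℕ) :
    (k + 1 - l).choose (l + 1) = (k - l).choose (l + 1) + (k - l).choose l := by
  rcases le_or_gt l k with hl | hl
  · rw [show k + 1 - l = k - l + 1 by omega, Nat.choose_succ_succ', add_comm]
  · rw [Nat.sub_eq_zero_of_le hl.le, show k + 1 - l = 0 by omega,
      Nat.choose_eq_zero_of_lt (show 0 < l + 1 by omega), Nat.choose_eq_zero_of_lt hl.pos]

section

variable {R : Type*} [CommRing R]

/-- The Lucas sequence `U_{k+1}(a, -b)`, in its explicit binomial form. -/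
def lucasSeq (a b : R) (k : ℕ) : R :=
  ∑ l ∈ range (k + 1), ((k - l).choose l : R) * a ^ (k - 2 * l) * b ^ l

theorem lucasSeq_term_succ (a b : R) (k l : ℕ) :
    ((k + 2 - (l + 1)).choose (l + 1) : R) * a ^ (k + 2 - 2 * (l + 1)) * b ^ (l + 1) =
      a * (((k + 1 - (l + 1)).choose (l + 1) : R) * a ^ (k + 1 - 2 * (l + 1)) * b ^ (l + 1)) +
        b * (((k - l).choose l : R) * a ^ (k - 2 * l) * b ^ l) := by
  rw [show k + 2 - (l + 1) = k + 1 - l by omega, show k + 1 - (l + 1) = k - l by omega,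
    Nat.choose_succ_sub_succ, show k + 2 - 2 * (l + 1) = k - 2 * l by omega]
  rcases lt_or_ge (2 * l) k with hl | hl
  · rw [show k - 2 * l = k + 1 - 2 * (l + 1) + 1 by omega]
    push_cast
    ring
  · rw [Nat.choose_eq_zero_of_lt (show k - l < l + 1 by omega)]
    simp only [Nat.cast_zero, zero_mul, mul_zero, zero_add]
    ring

theorem lucasSeq_zero (a b : R) : lucasSeq a b 0 = 1 := by
  simp [lucasSeq]

theorem lucasSeq_one (a b : R) : lucasSeq a b 1 = a := by
  simp [lucasSeq, sum_range_succ]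

theorem lucasSeq_add_two (a b : R) (k : ℕ) :
    lucasSeq a b (k + 2) = a * lucasSeq a b (k + 1) + b * lucasSeq a b k := by
  set g : ℕ → ℕ → R := fun k l => ((k - l).choose l : R) * a ^ (k - 2 * l) * b ^ l
  have htop : ∀ n, g n (n + 1) = 0 := fun n ↦ by simp [g, Nat.choose_eq_zero_of_lt]
  calc lucasSeq a b (k + 2)
      = ∑ l ∈ range (k + 2), g (k + 2) (l + 1) + g (k + 2) 0 := sum_range_succ' _ _
    _ = ∑ l ∈ range (k + 2), (a * g (k + 1) (l + 1) + b * g k l) + a * g (k + 1) 0 := by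
        rw [sum_congr rfl fun l _ => lucasSeq_term_succ a b k l]
        simp [g, pow_succ']
    _ = a * (∑ l ∈ range (k + 2), g (k + 1) (l + 1) + g (k + 1) 0) +
          b * ∑ l ∈ range (k + 2), g k l := by
        rw [sum_add_distrib, ← mul_sum, ← mul_sum]
        ring
    _ = a * lucasSeq a b (k + 1) + b * lucasSeq a b k := by
        rw [← sum_range_succ' (g (k + 1)), sum_range_succ (g (k + 1)) (k + 2), htop (k + 1),
          add_zero, sum_range_succ (g k) (k + 1), htop k, add_zero]
        rfl

theorem PowerSeries.mk_mul_eq_one_of_recurrence {f : ℕ → R} {a b : R}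
    (h0 : f 0 = 1) (h1 : f 1 = a) (hrec : ∀ k, f (k + 2) = a * f (k + 1) + b * f k) :
    mk f * (1 - C a * X - C b * X ^ 2) = 1 := by
  have hexp : mk f * (1 - C a * X - C b * X ^ 2) =
      mk f - C a * (mk f * X) - C b * (mk f * X ^ 2) := by ring
  rw [hexp]
  ext n
  simp only [map_sub, coeff_C_mul]
  rcases n with _ | _ | n
  · simp [h0]
  · simp [coeff_mul_X_pow', h0, h1]
  · simp [coeff_mul_X_pow', hrec]

theorem PowerSeries.mk_lucasSeq_mul (a b : R) :
    mk (lucasSeq a b) * (1 - C a * X - C b * X ^ 2) = 1 :=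
  mk_mul_eq_one_of_recurrence (lucasSeq_zero a b) (lucasSeq_one a b) (lucasSeq_add_two a b)

end

open Polynomial in
theorem delannoyPoly_eq_lucasSeq (ω : ℚ) (k : ℕ) :
    delannoyPoly ω k = lucasSeq (1 + X) (C ω * X) k := by
  refine sum_congr rfl fun l _ => ?_
  simp only [map_mul, map_pow, map_natCast]
  ring

theorem delannoy_poly_gf (ω : ℚ) :
    (PowerSeries.mk fun k => delannoyPoly ω k) *
        (1 - PowerSeries.X -
          PowerSeries.C (Polynomial.X : Polynomial ℚ) *
            (PowerSeries.X + PowerSeries.C (Polynomial.C ω) * PowerSeries.X ^ 2)) =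
      1 := by
  have hden : (1 - PowerSeries.X - PowerSeries.C (Polynomial.X : Polynomial ℚ) *
      (PowerSeries.X + PowerSeries.C (Polynomial.C ω) * PowerSeries.X ^ 2)) =
      1 - PowerSeries.C (1 + Polynomial.X) * PowerSeries.X -
        PowerSeries.C (Polynomial.C ω * Polynomial.X) * PowerSeries.X ^ 2 := by
    simp only [map_add, map_mul, map_one]
    ring
  simp only [delannoyPoly_eq_lucasSeq, hden]
  exact PowerSeries.mk_lucasSeq_mul _ _
end
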